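/- Let G'=(V',E') be a directed graph without self-loops in which every node has in-degree 2 and out-degree 2, and such that for every ordered pair of distinct nodes u,v there exist two edge-disjoint directed paths from u to v. Let e ∈ E' and let F be a frame for e. Define x^{(e)} ∈ ℝ^{E'} by x^{(e)}_e = 1, x^{(e)}_{e'} = 1/2 for e' ∈ F, and x^{(e)}_{e'} = 3/4 for all remaining edges e'. Then x^{(e)} ∈ AT_bal(G'). -/

import Mathlib

open Finset

namespace TSPGap


/-! ### Lovász–Schrijver lift-and-project operators -/

/-- `cone(R) = {(λ, λx) : λ ≥ 0, x ∈ R}`, with the extra 0th coordinate first. -/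
def lsCone {ι : Type*} (R : Set (ι → ℝ)) : Set (ℝ × (ι → ℝ)) :=
  {p | ∃ c : ℝ, ∃ y ∈ R, 0 ≤ c ∧ p.1 = c ∧ p.2 = fun i => c * y i}

/-- `X` is a protection matrix witnessing `x ∈ N(R)`: it is symmetric, its 0th row and
diagonal both equal `(1, x)`, and each row `X_i` and difference `X_0 - X_i` lies in `cone(R)`. -/
def IsProtection {ι : Type*} (R : Set (ι → ℝ)) (x : ι → ℝ)
    (X : Option ι → Option ι → ℝ) : Prop :=
  (∀ i j, X i j = X j i) ∧
  X none none = 1 ∧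
  (∀ i, X none (some i) = x i) ∧
  (∀ i, X (some i) (some i) = x i) ∧
  (∀ i, (X (some i) none, fun j => X (some i) (some j)) ∈ lsCone R) ∧
  (∀ i, (X none none - X (some i) none,
         fun j => X none (some j) - X (some i) (some j)) ∈ lsCone R)

/-- The Lovász–Schrijver `N` operator. -/
def lsN {ι : Type*} (R : Set (ι → ℝ)) : Set (ι → ℝ) :=
  {x | ∃ X : Option ι → Option ι → ℝ, IsProtection R x X}

/-- The Lovász–Schrijver `N₊` operator (protection matrix additionally PSD). -/
def lsNplus {ι : Type*} [Fintype ι] (R : Set (ι → ℝ)) : Set (ι → ℝ) :=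
  {x | ∃ X : Matrix (Option ι) (Option ι) ℝ, X.PosSemidef ∧
        IsProtection R x (fun i j => X i j)}

/-! ### Directed graphs -/

variable {V : Type*} [DecidableEq V]

/-- The list of (directed) steps of a walk given by its list of vertices. -/
def dSteps (l : List V) : List (V × V) := l.zip l.tail

/-- The steps of a closed walk given by its list of vertices. -/
def cycSteps (l : List V) : List (V × V) := l.zip (l.rotate 1)

/-- `l` is a directed walk from `u` to `v` using edges of `E`. -/
def IsDWalk (E : Finset (V × V)) (u v : V) (l : List V) : Prop :=
  l.head? = some u ∧ l.getLast? = some v ∧ ∀ a ∈ dSteps l, a ∈ E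

/-- Total weight of a walk. -/
def dWalkWeight (w : V × V → ℝ) (l : List V) : ℝ := ((dSteps l).map w).sum

/-- Shortest-path distance from `u` to `v` in the weighted directed graph `(E, w)`. -/
noncomputable def dDist (E : Finset (V × V)) (w : V × V → ℝ) (u v : V) : ℝ :=
  sInf {c | ∃ l : List V, IsDWalk E u v l ∧ dWalkWeight w l = c}

/-- `x(δ⁺(S))`. -/
def outCut (E : Finset (V × V)) (x : ↥E → ℝ) (S : Finset V) : ℝ :=
  ∑ e ∈ E.attach.filter (fun e => e.val.1 ∈ S ∧ e.val.2 ∉ S), x e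

/-- `x(δ⁻(S))`. -/
def inCut (E : Finset (V × V)) (x : ↥E → ℝ) (S : Finset V) : ℝ :=
  ∑ e ∈ E.attach.filter (fun e => e.val.1 ∉ S ∧ e.val.2 ∈ S), x e

/-- `d · x = ∑_e d_e x_e` over the edge set `E`. -/
def dDot (E : Finset (V × V)) (d : V × V → ℝ) (x : ↥E → ℝ) : ℝ :=
  ∑ e ∈ E.attach, d e.val * x e

/-- The balanced asymmetric tour polytope of the directed graph with node set `VS`
and edge set `E`. -/
def ATbal (VS : Finset V) (E : Finset (V × V)) : Set (↥E → ℝ) :=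
  {x | (∀ e, 0 ≤ x e ∧ x e ≤ 1) ∧
       (∀ S : Finset V, S ⊆ VS → S.Nonempty → S ≠ VS →
          1 ≤ outCut E x S ∧ 1 ≤ inCut E x S) ∧
       (∀ v ∈ VS, outCut E x {v} = inCut E x {v})}

/-- Indicator vectors of Hamiltonian cycles (on node set `VS`) among edges `E`. -/
def hamCycleVecs (VS : Finset V) (E : Finset (V × V)) : Set (↥E → ℝ) :=
  {x | ∃ c : List V, 2 ≤ c.length ∧ c.Nodup ∧ c.toFinset = VS ∧
        (∀ a ∈ cycSteps c, a ∈ E) ∧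
        ∀ e : ↥E, x e = if e.val ∈ cycSteps c then 1 else 0}

/-- Edge set of the complete directed graph on the node set `VS` (no self-loops). -/
def dComplete (VS : Finset V) : Finset (V × V) := (VS ×ˢ VS).filter (fun e => e.1 ≠ e.2)

/-- Edge set of the complete directed graph on all of `V` (no self-loops). -/
def dCompleteAll (V : Type*) [Fintype V] [DecidableEq V] : Finset (V × V) :=
  Finset.univ.filter (fun e => e.1 ≠ e.2)

/-- Out-degree of `v` in edge set `E`. -/
def outDeg (E : Finset (V × V)) (v : V) : ℕ := (E.filter (fun e => e.1 = v)).card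

/-- In-degree of `v` in edge set `E`. -/
def inDeg (E : Finset (V × V)) (v : V) : ℕ := (E.filter (fun e => e.2 = v)).card

/-- A frame for the edge `e = (u,v)`: a set `F ⊆ E \ {e}` consisting of an edge-simple
path from `u` to `v` together with zero or more edge-simple cycles, all pairwise
edge-disjoint. -/
def IsFrame (E : Finset (V × V)) (e : V × V) (F : Finset (V × V)) : Prop :=
  F ⊆ E.erase e ∧
  ∃ (p : List V) (cs : List (List V)),
    p.head? = some e.1 ∧ p.getLast? = some e.2 ∧ (∀ a ∈ dSteps p, a ∈ E) ∧
    (∀ c ∈ cs, c ≠ [] ∧ ∀ a ∈ cycSteps c, a ∈ E) ∧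
    (dSteps p ++ (cs.map cycSteps).flatten).Nodup ∧
    F = (dSteps p ++ (cs.map cycSteps).flatten).toFinset

/-- There exist two edge-disjoint directed (simple) paths from `u` to `v` in `E`. -/
def TwoEdgeDisjointPaths (E : Finset (V × V)) (u v : V) : Prop :=
  ∃ p q : List V, p.Nodup ∧ q.Nodup ∧
    p.head? = some u ∧ p.getLast? = some v ∧
    q.head? = some u ∧ q.getLast? = some v ∧
    (∀ a ∈ dSteps p, a ∈ E) ∧ (∀ a ∈ dSteps q, a ∈ E) ∧
    (dSteps p).Disjoint (dSteps q)




/-! ### The Charikar–Goemans–Karloff graphs -/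

/-- Vertex type housing the graph `G_{k,r}` (index `k = 0` is a dummy level). -/
def CGKV : ℕ → Type
  | 0 => PUnit
  | 1 => ℕ
  | k + 2 => (ℕ × CGKV (k + 1)) ⊕ Fin 2

instance CGKV.decEq : (k : ℕ) → DecidableEq (CGKV k)
  | 0 => inferInstanceAs (DecidableEq PUnit)
  | 1 => inferInstanceAs (DecidableEq ℕ)
  | k + 2 =>
      letI : DecidableEq (CGKV (k + 1)) := CGKV.decEq (k + 1)
      inferInstanceAs (DecidableEq ((ℕ × CGKV (k + 1)) ⊕ Fin 2))

/-- The source of `G_{k,r}`. -/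
def CGKsrc (r : ℕ) : (k : ℕ) → CGKV k
  | 0 => PUnit.unit
  | 1 => (0 : ℕ)
  | _ + 2 => Sum.inr 0

/-- The sink of `G_{k,r}`. -/
def CGKsnk (r : ℕ) : (k : ℕ) → CGKV k
  | 0 => PUnit.unit
  | 1 => (r + 1 : ℕ)
  | _ + 2 => Sum.inr 1

/-- The node set of `G_{k,r}`. -/
def CGKVS (r : ℕ) : (k : ℕ) → Finset (CGKV k)
  | 0 => ∅
  | 1 => Finset.range (r + 2)
  | k + 2 =>
      ((Finset.range r) ×ˢ CGKVS r (k + 1)).image Sum.inl ∪ {Sum.inr 0, Sum.inr 1}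

/-- The edge set of `G_{k,r}`: at level 1, two oppositely-directed paths of `r+1` edges
on the nodes `0, …, r+1`; at level `k+2`, the edges of the `r` copies of `G_{k+1,r}`
together with a path from the source `s` through the copies' sources to the sink `t`,
and a path from `t` through the copies' sinks (in the opposite order) back to `s`. -/
def CGKE (r : ℕ) : (k : ℕ) → Finset (CGKV k × CGKV k)
  | 0 => ∅
  | 1 => (dSteps (List.range (r + 2))).toFinset ∪
         (dSteps (List.range (r + 2)).reverse).toFinset
  | k + 2 =>
      (Finset.range r).biUnion
        (fun j => (CGKE r (k + 1)).image (fun e => (Sum.inl (j, e.1), Sum.inl (j, e.2)))) ∪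
      (dSteps (Sum.inr 0 ::
        ((List.range r).map (fun j => Sum.inl (j, CGKsrc r (k + 1)))) ++ [Sum.inr 1])).toFinset ∪
      (dSteps (Sum.inr 1 ::
        (((List.range r).map (fun j => Sum.inl (j, CGKsnk r (k + 1)))).reverse) ++ [Sum.inr 0])).toFinset

/-- Edge weights of `G_{k,r}` (and of `L_{k,r}`): level-`ℓ` edges have weight `r^(ℓ-1)`. -/
def CGKw (r : ℕ) : (k : ℕ) → CGKV k × CGKV k → ℝ
  | 0, _ => 0
  | 1, _ => 1
  | k + 2, e =>
      match e with
      | (Sum.inl (j, u), Sum.inl (j', v)) =>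
          if j = j' then CGKw r (k + 1) (u, v) else (r : ℝ) ^ (k + 1)
      | _ => (r : ℝ) ^ (k + 1)

/-- `v₁`: the successor of `s` on the forward path of `G_{k,r}`. -/
def Lv1 (r : ℕ) : (k : ℕ) → CGKV k
  | 0 => PUnit.unit
  | 1 => (1 : ℕ)
  | k + 2 => Sum.inl (0, CGKsrc r (k + 1))

/-- `v₂`: the predecessor of `t` on the forward path of `G_{k,r}`. -/
def Lv2 (r : ℕ) : (k : ℕ) → CGKV k
  | 0 => PUnit.unit
  | 1 => (r : ℕ)
  | k + 2 => Sum.inl (r - 1, CGKsrc r (k + 1))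

/-- `v₃`: the successor of `t` on the backward path of `G_{k,r}`. -/
def Lv3 (r : ℕ) : (k : ℕ) → CGKV k
  | 0 => PUnit.unit
  | 1 => (r : ℕ)
  | k + 2 => Sum.inl (r - 1, CGKsnk r (k + 1))

/-- `v₄`: the predecessor of `s` on the backward path of `G_{k,r}`. -/
def Lv4 (r : ℕ) : (k : ℕ) → CGKV k
  | 0 => PUnit.unit
  | 1 => (1 : ℕ)
  | k + 2 => Sum.inl (0, CGKsnk r (k + 1))

/-- The node set `V_{k,r}` of `L_{k,r}`: the nodes of `G_{k,r}` minus the two terminals. -/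
def LVS (r k : ℕ) : Finset (CGKV k) :=
  ((CGKVS r k).erase (CGKsrc r k)).erase (CGKsnk r k)

/-- The edge set `E_{k,r}` of `L_{k,r}`: the edges of `G_{k,r}` not incident to a terminal,
plus the two new edges `(v₂,v₁)` and `(v₄,v₃)`. -/
def LE (r k : ℕ) : Finset (CGKV k × CGKV k) :=
  (CGKE r k).filter (fun e =>
    e.1 ≠ CGKsrc r k ∧ e.1 ≠ CGKsnk r k ∧ e.2 ≠ CGKsrc r k ∧ e.2 ≠ CGKsnk r k) ∪
  {(Lv2 r k, Lv1 r k), (Lv4 r k, Lv3 r k)}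



/-! ### Undirected graphs -/

variable {V : Type*} [DecidableEq V]

/-- The (undirected) steps of a walk given by its list of vertices. -/
def uSteps (l : List V) : List (Sym2 V) := (l.zip l.tail).map (Function.uncurry Sym2.mk)

/-- `l` is a walk from `u` to `v` in the undirected edge set `E`. -/
def IsUWalk (E : Finset (Sym2 V)) (u v : V) (l : List V) : Prop :=
  l.head? = some u ∧ l.getLast? = some v ∧ ∀ e ∈ uSteps l, e ∈ E

/-- Whether the undirected edge `e` crosses the cut `(S, S̄)`. -/
def uCrosses (S : Finset V) (e : Sym2 V) : Bool :=
  Sym2.lift ⟨fun a b => xor (decide (a ∈ S)) (decide (b ∈ S)),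
    fun a b => Bool.xor_comm _ _⟩ e

/-- `x(δ(S))`. -/
def uCut (E : Finset (Sym2 V)) (x : ↥E → ℝ) (S : Finset V) : ℝ :=
  ∑ e ∈ E.attach.filter (fun e => uCrosses S e.val), x e

/-- `d · x = ∑_e d_e x_e` over the undirected edge set `E`. -/
def uDot (E : Finset (Sym2 V)) (d : Sym2 V → ℝ) (x : ↥E → ℝ) : ℝ :=
  ∑ e ∈ E.attach, d e.val * x e

/-- The symmetric tour polytope of the undirected graph with node set `VS`, edges `E`. -/
def STpoly (VS : Finset V) (E : Finset (Sym2 V)) : Set (↥E → ℝ) :=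
  {x | (∀ e, 0 ≤ x e ∧ x e ≤ 1) ∧
       (∀ S : Finset V, S ⊆ VS → S.Nonempty → S ≠ VS → 2 ≤ uCut E x S) ∧
       (∀ v ∈ VS, uCut E x {v} = 2)}

/-- The symmetric path polytope of the undirected graph with node set `VS`, edges `E`,
and endpoints `s`, `t`. -/
def SPpoly (VS : Finset V) (E : Finset (Sym2 V)) (s t : V) : Set (↥E → ℝ) :=
  {x | (∀ e, 0 ≤ x e ∧ x e ≤ 1) ∧
       (∀ S : Finset V, S ⊆ VS → S.Nonempty → S ≠ VS →
          (((s ∈ S) ↔ (t ∈ S)) → 2 ≤ uCut E x S) ∧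
          (¬((s ∈ S) ↔ (t ∈ S)) → 1 ≤ uCut E x S)) ∧
       (∀ v ∈ VS, v ≠ s → v ≠ t → uCut E x {v} = 2) ∧
       uCut E x {s} = 1 ∧ uCut E x {t} = 1}

/-- Indicator vectors of Hamiltonian paths from `s` to `t` (on node set `VS`) among
edges `E`. -/
def uHamPathVecs (VS : Finset V) (E : Finset (Sym2 V)) (s t : V) : Set (↥E → ℝ) :=
  {x | ∃ p : List V, p.Nodup ∧ p.toFinset = VS ∧
        p.head? = some s ∧ p.getLast? = some t ∧
        (∀ e ∈ uSteps p, e ∈ E) ∧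
        ∀ e : ↥E, x e = if e.val ∈ uSteps p then 1 else 0}

/-- Edge set of the complete undirected graph on all of `V` (no self-loops). -/
def uCompleteAll (V : Type*) [Fintype V] [DecidableEq V] : Finset (Sym2 V) :=
  Finset.univ.filter (fun e => ¬ e.IsDiag)

/-- Shortest-path distance (number of edges) between the endpoints of `e`, in the
unweighted undirected graph with edge set `E`. -/
noncomputable def uDist (E : Finset (Sym2 V)) (e : Sym2 V) : ℝ :=
  sInf {c | ∃ u v : V, e = s(u, v) ∧
    ∃ l : List V, IsUWalk E u v l ∧ ((uSteps l).length : ℝ) = c}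

/-! ### Cheung's graphs -/

/-- The node set `V_{ℓ,q}` of Cheung's graph `G_{ℓ,q}`: a top path and a bottom path of
`ℓ+1` nodes each, a left and a right clique of `3q+3` nodes each, and nodes `s`, `t`. -/
inductive ChV (l q : ℕ) where
  | top : Fin (l + 1) → ChV l q
  | bot : Fin (l + 1) → ChV l q
  | left : Fin (3 * q + 3) → ChV l q
  | right : Fin (3 * q + 3) → ChV l q
  | vs : ChV l q
  | vt : ChV l q
deriving DecidableEq, Fintype

/-- The edges of the two paths of `G_{ℓ,q}`. -/
def ChEpaths (l q : ℕ) : Finset (Sym2 (ChV l q)) :=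
  (Finset.univ : Finset (Fin l)).image
    (fun i => s(ChV.top i.castSucc, ChV.top i.succ)) ∪
  (Finset.univ : Finset (Fin l)).image
    (fun i => s(ChV.bot i.castSucc, ChV.bot i.succ))

/-- The edges within the two cliques of `G_{ℓ,q}`. -/
def ChEcliques (l q : ℕ) : Finset (Sym2 (ChV l q)) :=
  ((Finset.univ : Finset (Fin (3 * q + 3) × Fin (3 * q + 3))).filter
      (fun p => p.1 ≠ p.2)).image (fun p => s(ChV.left p.1, ChV.left p.2)) ∪
  ((Finset.univ : Finset (Fin (3 * q + 3) × Fin (3 * q + 3))).filter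
      (fun p => p.1 ≠ p.2)).image (fun p => s(ChV.right p.1, ChV.right p.2))

/-- The connection edges of `G_{ℓ,q}`: path endpoints to the cliques, `s` to the left
clique, and `t` to the right clique. -/
def ChEconn (l q : ℕ) : Finset (Sym2 (ChV l q)) :=
  (Finset.univ : Finset (Fin (3 * q + 3))).image (fun i => s(ChV.top 0, ChV.left i)) ∪
  (Finset.univ : Finset (Fin (3 * q + 3))).image (fun i => s(ChV.bot 0, ChV.left i)) ∪
  (Finset.univ : Finset (Fin (3 * q + 3))).image
    (fun i => s(ChV.top (Fin.last l), ChV.right i)) ∪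
  (Finset.univ : Finset (Fin (3 * q + 3))).image
    (fun i => s(ChV.bot (Fin.last l), ChV.right i)) ∪
  (Finset.univ : Finset (Fin (3 * q + 3))).image (fun i => s(ChV.vs, ChV.left i)) ∪
  (Finset.univ : Finset (Fin (3 * q + 3))).image (fun i => s(ChV.vt, ChV.right i))

/-- The edge set `E_{ℓ,q}` of Cheung's graph `G_{ℓ,q}`. -/
def ChE (l q : ℕ) : Finset (Sym2 (ChV l q)) :=
  ChEpaths l q ∪ ChEcliques l q ∪ ChEconn l q

/-- The node set of `G'_{ℓ,q}`: `G_{ℓ,q}` plus `ℓ-1` new internal path nodes. -/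
inductive ChV' (l q : ℕ) where
  | old : ChV l q → ChV' l q
  | mid : Fin (l - 1) → ChV' l q
deriving DecidableEq, Fintype

/-- The new `s`–`t` path of `G'_{ℓ,q}` (as a list of nodes; it has `ℓ` edges). -/
def ChPathList (l q : ℕ) : List (ChV' l q) :=
  ChV'.old ChV.vs :: ((List.finRange (l - 1)).map ChV'.mid ++ [ChV'.old ChV.vt])

/-- The edge set `E'_{ℓ,q}` of `G'_{ℓ,q}`: the (old) edges of `G_{ℓ,q}` together with the
`ℓ` new edges of a path from `s` to `t` through `ℓ-1` new nodes. -/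
def ChE' (l q : ℕ) : Finset (Sym2 (ChV' l q)) :=
  (ChE l q).image (Sym2.map ChV'.old) ∪ (uSteps (ChPathList l q)).toFinset


/-! Every coordinate is at least `1/2`, and each of the two edge-disjoint paths from a node
inside a cut to one outside crosses it, so every cut has weight at least `1`. For balance,
write `x^{(e)} = 3/4 + 1/4 𝟙_e - 1/4 𝟙_F`: the constant part is balanced because in- and
out-degrees agree, and `𝟙_F - 𝟙_e` is a circulation because the path of the frame, closed up
by the reversed edge `e`, and the cycles of the frame are closed walks. -/

lemma dSteps_map_fst {α : Type*} : ∀ p : List α, (dSteps p).map Prod.fst = p.dropLast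
  | [] => rfl
  | [_] => rfl
  | a :: b :: t => by
    have ih := dSteps_map_fst (b :: t)
    simp only [dSteps, List.tail_cons, List.zip_cons_cons, List.map_cons] at ih ⊢
    rw [ih, List.dropLast_cons_cons]

lemma dSteps_map_snd {α : Type*} (p : List α) : (dSteps p).map Prod.snd = p.tail :=
  List.map_snd_zip (by cases p <;> simp)

lemma countP_fst_cycSteps (c : List V) (v : V) :
    (cycSteps c).countP (fun a => a.1 = v) = (cycSteps c).countP (fun a => a.2 = v) := by
  have hfst : (cycSteps c).map Prod.fst = c := List.map_fst_zip (by simp)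
  have hsnd : (cycSteps c).map Prod.snd = c.rotate 1 := List.map_snd_zip (by simp)
  calc (cycSteps c).countP (fun a => a.1 = v)
      = ((cycSteps c).map Prod.fst).countP (fun y => y = v) := by rw [List.countP_map]; rfl
    _ = ((cycSteps c).map Prod.snd).countP (fun y => y = v) := by
        rw [hfst, hsnd, ((List.rotate_perm c 1).countP_eq _)]
    _ = (cycSteps c).countP (fun a => a.2 = v) := by rw [List.countP_map]; rfl

lemma countP_fst_dSteps_add {p : List V} {u w : V} (hu : p.head? = some u)
    (hw : p.getLast? = some w) (v : V) :
    (dSteps p).countP (fun a => a.1 = v) + (if w = v then 1 else 0)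
      = (dSteps p).countP (fun a => a.2 = v) + (if u = v then 1 else 0) := by
  have hp : p ≠ [] := by rintro rfl; simp at hu
  rw [List.head?_eq_some_head hp, Option.some_inj] at hu
  rw [List.getLast?_eq_some_getLast hp, Option.some_inj] at hw
  have hfst : (dSteps p).countP (fun a => a.1 = v) = p.dropLast.countP (fun y => y = v) := by
    rw [← dSteps_map_fst, List.countP_map]; rfl
  have hsnd : (dSteps p).countP (fun a => a.2 = v) = p.tail.countP (fun y => y = v) := by
    rw [← dSteps_map_snd, List.countP_map]; rfl
  have hdropLast := congrArg (List.countP (fun y => y = v)) (List.dropLast_append_getLast hp)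
  have htail := congrArg (List.countP (fun y => y = v)) (List.cons_head_tail hp)
  simp only [List.countP_append, List.countP_cons, List.countP_nil, decide_eq_true_eq, hu, hw]
    at hdropLast htail
  omega

lemma exists_mem_dSteps_mem_notMem {α : Type*} (S : Finset α) :
    ∀ {l : List α} {u w : α},
      l.head? = some u → l.getLast? = some w → u ∈ S → w ∉ S →
        ∃ a ∈ dSteps l, a.1 ∈ S ∧ a.2 ∉ S
  | [], _, _, hu, _, _, _ => by simp at hu
  | [_], _, _, hu, hw, huS, hwS => by
    simp only [List.head?_cons, List.getLast?_singleton, Option.some_inj] at hu hw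
    exact absurd (hw ▸ hu ▸ huS) hwS
  | a :: b :: l, _, _, hu, hw, huS, hwS => by
    simp only [List.head?_cons, Option.some_inj] at hu
    subst hu
    by_cases hb : b ∈ S
    · obtain ⟨c, hc, hcS⟩ := exists_mem_dSteps_mem_notMem S (l := b :: l) rfl
        (by rwa [← List.getLast?_cons_cons]) hb hwS
      refine ⟨c, ?_, hcS⟩
      simp only [dSteps, List.tail_cons, List.zip_cons_cons, List.mem_cons] at hc ⊢
      exact Or.inr hc
    · exact ⟨(a, b), by simp [dSteps], huS, hb⟩

lemma card_filter_toFinset {α : Type*} [DecidableEq α] {l : List α} (hl : l.Nodup)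
    (p : α → Prop) [DecidablePred p] : (l.toFinset.filter p).card = l.countP (fun a => p a) := by
  rw [List.countP_eq_length_filter, ← List.toFinset_card_of_nodup (hl.filter _),
    List.toFinset_filter]
  simp

lemma IsFrame.card_filter_fst_add {E F : Finset (V × V)} {e : V × V} (hF : IsFrame E e F)
    (v : V) :
    (F.filter (fun a => a.1 = v)).card + (if e.2 = v then 1 else 0)
      = (F.filter (fun a => a.2 = v)).card + (if e.1 = v then 1 else 0) := by
  obtain ⟨-, p, cs, hp₁, hp₂, -, -, hnd, rfl⟩ := hF
  have hcycles : ((cs.map cycSteps).map (List.countP (fun a => a.1 = v))).sum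
      = ((cs.map cycSteps).map (List.countP (fun a => a.2 = v))).sum := by
    simp only [List.map_map]
    exact congrArg List.sum (List.map_congr_left fun c _ => countP_fst_cycSteps c v)
  rw [card_filter_toFinset hnd, card_filter_toFinset hnd, List.countP_append,
    List.countP_append, List.countP_flatten, List.countP_flatten, hcycles]
  have := countP_fst_dSteps_add hp₁ hp₂ v
  omega

lemma inCut_eq_outCut_compl [Fintype V] (E : Finset (V × V)) (x : ↥E → ℝ) (S : Finset V) :
    inCut E x S = outCut E x Sᶜ := by
  simp only [inCut, outCut, mem_compl, not_not]

lemma TwoEdgeDisjointPaths.one_le_outCut {E : Finset (V × V)} {u w : V}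
    (h : TwoEdgeDisjointPaths E u w) {S : Finset V} (hu : u ∈ S) (hw : w ∉ S)
    {x : ↥E → ℝ} (hx : ∀ a, 1 / 2 ≤ x a) : 1 ≤ outCut E x S := by
  obtain ⟨p, q, -, -, hp₁, hp₂, hq₁, hq₂, hpE, hqE, hpq⟩ := h
  obtain ⟨a, hap, haS⟩ := exists_mem_dSteps_mem_notMem S hp₁ hp₂ hu hw
  obtain ⟨b, hbq, hbS⟩ := exists_mem_dSteps_mem_notMem S hq₁ hq₂ hu hw
  have hab : a ≠ b := fun h => hpq hap (h ▸ hbq)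
  calc (1 : ℝ) = 1 / 2 + 1 / 2 := by norm_num
    _ ≤ x ⟨a, hpE a hap⟩ + x ⟨b, hqE b hbq⟩ := add_le_add (hx _) (hx _)
    _ = ∑ c ∈ {⟨a, hpE a hap⟩, ⟨b, hqE b hbq⟩}, x c :=
        (sum_pair fun h => hab (congrArg Subtype.val h)).symm
    _ ≤ outCut E x S := by
      refine sum_le_sum_of_subset_of_nonneg ?_ fun c _ _ => le_trans (by norm_num) (hx c)
      intro c hc
      rcases mem_insert.1 hc with rfl | hc
      · exact mem_filter.2 ⟨mem_attach _ _, haS⟩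
      · rw [mem_singleton.1 hc]
        exact mem_filter.2 ⟨mem_attach _ _, hbS⟩

lemma outCut_singleton_sub_inCut_singleton (E : Finset (V × V)) (x : ↥E → ℝ) (v : V) :
    outCut E x {v} - inCut E x {v}
      = ∑ a ∈ E.attach with a.val.1 = v, x a - ∑ a ∈ E.attach with a.val.2 = v, x a := by
  rw [← sum_filter_add_sum_filter_not (E.attach.filter (·.val.1 = v)) (·.val.2 = v),
    ← sum_filter_add_sum_filter_not (E.attach.filter (·.val.2 = v)) (·.val.1 = v)]
  simp only [outCut, inCut, filter_filter, mem_singleton, and_comm]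
  ring

lemma sum_attach_filter {α : Type*} (s : Finset α) (p : α → Prop) [DecidablePred p]
    (f : α → ℝ) : ∑ a ∈ s.attach with p a.val, f a.val = ∑ a ∈ s with p a, f a := by
  rw [sum_filter, sum_filter]
  exact sum_attach s fun a => if p a then f a else 0

/-- The vector `x^{(e)}`, extended to all pairs of nodes. -/
noncomputable def frameWeight (e : V × V) (F : Finset (V × V)) (a : V × V) : ℝ :=
  if a = e then 1 else if a ∈ F then 1 / 2 else 3 / 4

lemma half_le_frameWeight (e : V × V) (F : Finset (V × V)) (a : V × V) :
    1 / 2 ≤ frameWeight e F a := by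
  unfold frameWeight; split_ifs <;> norm_num

lemma frameWeight_le_one (e : V × V) (F : Finset (V × V)) (a : V × V) :
    frameWeight e F a ≤ 1 := by
  unfold frameWeight; split_ifs <;> norm_num

lemma sum_frameWeight {e : V × V} {F : Finset (V × V)} (heF : e ∉ F) (A : Finset (V × V)) :
    ∑ a ∈ A, frameWeight e F a
      = 3 / 4 * A.card + (if e ∈ A then 1 / 4 else 0) - 1 / 4 * (A ∩ F).card := by
  have hsplit : ∀ a, frameWeight e F a
      = 3 / 4 + (if a = e then 1 / 4 else 0) - (if a ∈ F then 1 / 4 else 0) := by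
    intro a
    unfold frameWeight
    by_cases hae : a = e
    · subst hae
      simp only [↓reduceIte, heF]
      norm_num
    · split_ifs <;> norm_num
  simp only [hsplit, sum_sub_distrib, sum_add_distrib, sum_const, sum_ite_eq', sum_ite_mem,
    nsmul_eq_mul]
  ring

lemma outCut_frameWeight_singleton {E F : Finset (V × V)} {e : V × V} (he : e ∈ E)
    (hF : IsFrame E e F) {v : V} (hdeg : outDeg E v = inDeg E v) :
    outCut E (fun a => frameWeight e F a.val) {v}
      = inCut E (fun a => frameWeight e F a.val) {v} := by
  have heF : e ∉ F := fun h => (mem_erase.1 (hF.1 h)).1 rfl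
  have hFE : F ⊆ E := hF.1.trans (erase_subset e E)
  have hframe : ((F.filter (·.1 = v)).card : ℝ) + (if e.2 = v then 1 else 0)
      = (F.filter (·.2 = v)).card + (if e.1 = v then 1 else 0) := by
    exact_mod_cast hF.card_filter_fst_add v
  rw [outDeg, inDeg] at hdeg
  rw [← sub_eq_zero, outCut_singleton_sub_inCut_singleton, sum_attach_filter E (·.1 = v),
    sum_attach_filter E (·.2 = v), sum_frameWeight heF, sum_frameWeight heF, filter_inter,
    filter_inter, inter_eq_right.2 hFE, hdeg]
  simp only [mem_filter, he, true_and]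
  split_ifs at hframe ⊢ <;> linarith

theorem stmt6_general {V : Type*} [Fintype V] [DecidableEq V] (E : Finset (V × V))
    (hdeg : ∀ v : V, outDeg E v = 2 ∧ inDeg E v = 2)
    (hpaths : ∀ u v : V, u ≠ v → TwoEdgeDisjointPaths E u v)
    (e : V × V) (he : e ∈ E) (F : Finset (V × V)) (hF : IsFrame E e F) :
    (fun e' : ↥E => if e'.val = e then (1 : ℝ)
                    else if e'.val ∈ F then 1 / 2 else 3 / 4)
      ∈ ATbal Finset.univ E := by
  have hhalf : ∀ a : ↥E, 1 / 2 ≤ frameWeight e F a := fun a => half_le_frameWeight e F a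
  refine ⟨fun a => ⟨le_trans (by norm_num) (hhalf a), frameWeight_le_one e F a⟩,
    fun S _ ⟨u, hu⟩ hS => ?_,
    fun v _ => outCut_frameWeight_singleton he hF ((hdeg v).1.trans (hdeg v).2.symm)⟩
  obtain ⟨w, hw⟩ : ∃ w, w ∉ S := by
    by_contra! h
    exact hS (eq_univ_of_forall h)
  have huw : u ≠ w := fun h => hw (h ▸ hu)
  refine ⟨(hpaths u w huw).one_le_outCut hu hw hhalf, ?_⟩
  rw [inCut_eq_outCut_compl]
  exact (hpaths w u huw.symm).one_le_outCut (mem_compl.2 hw) (by simpa using hu) hhalf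

theorem stmt6 {V : Type*} [Fintype V] [DecidableEq V] (E : Finset (V × V))
    (hloop : ∀ e ∈ E, e.1 ≠ e.2)
    (hdeg : ∀ v : V, outDeg E v = 2 ∧ inDeg E v = 2)
    (hpaths : ∀ u v : V, u ≠ v → TwoEdgeDisjointPaths E u v)
    (e : V × V) (he : e ∈ E) (F : Finset (V × V)) (hF : IsFrame E e F) :
    (fun e' : ↥E => if e'.val = e then (1 : ℝ)
                    else if e'.val ∈ F then 1 / 2 else 3 / 4)
      ∈ ATbal Finset.univ E :=
  stmt6_general E hdeg hpaths e he F hF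

end TSPGap
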